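/- Let k ≥ 2, n ≥ 2 and L ≥ 1. If s : ZMod L → Fin k is an adjacency-hopping de Bruijn sequence H(k,n), then L = k·(k-1)^(n-1). -/

import Mathlib

/-- A word `w` of length `m` over the alphabet `Fin k` is adjacency-hopping if
`w i ≠ w (i+1)` for all `i` with `i + 1 < m`. -/
def IsAdjHop (k m : ℕ) (w : Fin m → Fin k) : Prop :=
  ∀ i : ℕ, (h : i + 1 < m) → w ⟨i, by omega⟩ ≠ w ⟨i + 1, h⟩


/-- `s : ZMod L → Fin k` is an adjacency-hopping de Bruijn sequence `H(k,n)` if all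
neighboring codes differ and every adjacency-hopping word of length `n` occurs exactly
once as a (cyclic) subsequence. -/
def IsAHDB (k n L : ℕ) (s : ZMod L → Fin k) : Prop :=
  (∀ i, s i ≠ s (i + 1)) ∧
  ∀ w : Fin n → Fin k, IsAdjHop k n w →
    ∃! i : ZMod L, ∀ j : Fin n, s (i + (j : ℕ)) = w j

/-! The windows `i ↦ (s i, s (i+1), …, s (i+n-1))` of an adjacency-hopping sequence are
adjacency-hopping words, and the de Bruijn property says exactly that the window map is a
bijection from `ZMod L` onto these words. Counting them, the first letter is free and each
later letter is any of the `k - 1` letters different from its predecessor. -/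

theorem isAdjHop_succ_iff {k m : ℕ} (w : Fin (m + 2) → Fin k) :
    IsAdjHop k (m + 2) w ↔ w 0 ≠ Fin.tail w 0 ∧ IsAdjHop k (m + 1) (Fin.tail w) := by
  constructor
  · intro h
    exact ⟨h 0 (by omega), fun i hi => h (i + 1) (by omega)⟩
  · rintro ⟨h₀, h⟩ (_ | i) hi
    · exact h₀
    · exact h i (by omega)

def adjHopSuccEquiv (k m : ℕ) :
    {w : Fin (m + 2) → Fin k // IsAdjHop k (m + 2) w} ≃
      Σ w : {w : Fin (m + 1) → Fin k // IsAdjHop k (m + 1) w}, {a : Fin k // a ≠ w.1 0} where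
  toFun w :=
    ⟨⟨Fin.tail w.1, ((isAdjHop_succ_iff _).1 w.2).2⟩, ⟨w.1 0, ((isAdjHop_succ_iff _).1 w.2).1⟩⟩
  invFun x := ⟨Fin.cons x.2.1 x.1.1, (isAdjHop_succ_iff _).2 ⟨x.2.2, x.1.2⟩⟩
  left_inv w := Subtype.ext (Fin.cons_self_tail w.1)
  right_inv _ := Sigma.subtype_ext rfl rfl

theorem card_isAdjHop (k m : ℕ) :
    Nat.card {w : Fin (m + 1) → Fin k // IsAdjHop k (m + 1) w} = k * (k - 1) ^ m := by
  classical
  induction m with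
  | zero =>
    have : ∀ w : Fin 1 → Fin k, IsAdjHop k 1 w := fun w i hi => absurd hi (by omega)
    simp [this, Nat.card_eq_fintype_card]
  | succ m ih =>
    calc Nat.card {w : Fin (m + 2) → Fin k // IsAdjHop k (m + 2) w}
        = ∑ w : {w : Fin (m + 1) → Fin k // IsAdjHop k (m + 1) w}, Nat.card {a // a ≠ w.1 0} := by
          rw [Nat.card_congr (adjHopSuccEquiv k m), Nat.card_sigma]
      _ = Nat.card {w : Fin (m + 1) → Fin k // IsAdjHop k (m + 1) w} * (k - 1) := by
          simp [Nat.card_eq_fintype_card]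
      _ = k * (k - 1) ^ (m + 1) := by rw [ih, pow_succ, mul_assoc]

section window

variable {k n L : ℕ} {s : ZMod L → Fin k}

def window (s : ZMod L → Fin k) (n : ℕ) (i : ZMod L) : Fin n → Fin k :=
  fun j => s (i + (j : ℕ))

theorem isAdjHop_window (hs : ∀ i, s i ≠ s (i + 1)) (i : ZMod L) :
    IsAdjHop k n (window s n i) :=
  fun j _ => by simpa [window, add_assoc] using hs (i + j)

theorem IsAHDB.bijective_window (hs : IsAHDB k n L s) :
    Function.Bijective fun i : ZMod L =>
      (⟨window s n i, isAdjHop_window hs.1 i⟩ : {w : Fin n → Fin k // IsAdjHop k n w}) := by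
  refine ⟨fun i₁ i₂ h => ?_, fun w => ?_⟩
  · exact (hs.2 _ (isAdjHop_window hs.1 i₁)).unique (fun _ => rfl)
      (congrFun (Subtype.ext_iff.1 h).symm)
  · obtain ⟨i, hi, -⟩ := hs.2 w.1 w.2
    exact ⟨i, Subtype.ext (funext hi)⟩

end window

theorem stmt_7_general (k n L : ℕ) (hn : 2 ≤ n)
    (s : ZMod L → Fin k) (hs : IsAHDB k n L s) :
    L = k * (k - 1) ^ (n - 1) := by
  obtain ⟨m, rfl⟩ : ∃ m, n = m + 1 := ⟨n - 1, by omega⟩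
  rw [← Nat.card_zmod L, Nat.card_congr (Equiv.ofBijective _ hs.bijective_window), card_isAdjHop]
  rfl

/-- Any adjacency-hopping de Bruijn sequence `H(k,n)` of length `L`
has `L = k * (k-1)^(n-1)`. -/
theorem stmt_7 (k n L : ℕ) (hk : 2 ≤ k) (hn : 2 ≤ n) (hL : 1 ≤ L)
    (s : ZMod L → Fin k) (hs : IsAHDB k n L s) :
    L = k * (k - 1) ^ (n - 1) :=
  stmt_7_general k n L hn s hs
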